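/- arXiv:1109.5301 — 5 statements merged into one kernel-verified Lean document; each statement's English description precedes it below -/
import Mathlib

section
/- The multi-dimensional theta series Θ(z) = Σ_{m∈ℤ^g} exp(½⟨Bm,m⟩ + ⟨m,z⟩) converges absolutely for every z ∈ ℂ^g, provided B is a symmetric complex g×g matrix whose real part is negative definite. -/
/-!
Compactness of the unit sphere turns negative definiteness of `Re B` into a uniform bound
`Re ⟨Bx, x⟩ ≤ -ε |x|²`. The absolute value of the `m`-th term is then dominated by
`∏ i, exp (-(ε/2) m_i² + m_i Re z_i)`, a product of one-variable Jacobi theta terms, each of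
which is summable over `ℤ`.
-/

open Complex Real in
theorem summable_exp_neg_mul_sq_add_mul {a : ℝ} (ha : 0 < a) (b : ℝ) :
    Summable fun n : ℤ => rexp (-a * n ^ 2 + n * b) := by
  have hτ : 0 < ((a / π : ℝ) * I : ℂ).im := by simpa using div_pos ha pi_pos
  convert ((summable_jacobiTheta₂_term_iff ((-(b / (2 * π)) : ℝ) * I) _).2 hτ).norm using 2 with n
  rw [norm_jacobiTheta₂_term, mul_I_im, mul_I_im, ofReal_re, ofReal_re]
  congr 1
  field_simp
  ring

theorem summable_pi_prod_of_nonneg {ι : Type*} [Fintype ι] {κ : ι → Type*}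
    {f : ∀ i, κ i → ℝ} (hf0 : ∀ i a, 0 ≤ f i a) (hf : ∀ i, Summable (f i)) :
    Summable fun m : (∀ i, κ i) => ∏ i, f i (m i) := by
  classical
  refine summable_of_sum_le (fun m => Finset.prod_nonneg fun i _ => hf0 i (m i))
    (c := ∏ i, ∑' a, f i a) fun s => ?_
  let t : ∀ i, Finset (κ i) := fun i => s.image fun m => m i
  calc ∑ m ∈ s, ∏ i, f i (m i)
      ≤ ∑ m ∈ Fintype.piFinset t, ∏ i, f i (m i) :=
        Finset.sum_le_sum_of_subset_of_nonneg
          (fun m hm => Fintype.mem_piFinset.2 fun i => Finset.mem_image_of_mem _ hm)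
          fun m _ _ => Finset.prod_nonneg fun i _ => hf0 i (m i)
    _ = ∏ i, ∑ a ∈ t i, f i a := (Finset.prod_univ_sum t f).symm
    _ ≤ ∏ i, ∑' a, f i a :=
        Finset.prod_le_prod (fun i _ => Finset.sum_nonneg fun a _ => hf0 i a)
          fun i _ => (hf i).sum_le_tsum _ fun a _ => hf0 i a

theorem exists_pos_le_neg_mul_norm_sq {E : Type*} [NormedAddCommGroup E] [NormedSpace ℝ E]
    [ProperSpace E] {Q : E → ℝ} (hQ : Continuous Q) (hhom : ∀ (t : ℝ) x, Q (t • x) = t ^ 2 * Q x)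
    (hneg : ∀ x ≠ 0, Q x < 0) : ∃ ε > 0, ∀ x, Q x ≤ -ε * ‖x‖ ^ 2 := by
  have hQ0 : Q 0 = 0 := by simpa using hhom 0 0
  rcases subsingleton_or_nontrivial E with hE | hE
  · exact ⟨1, one_pos, fun x => by simp [Subsingleton.elim x 0, hQ0]⟩
  obtain ⟨x₀, hx₀, hmax⟩ := (isCompact_sphere (0 : E) 1).exists_isMaxOn
    (NormedSpace.sphere_nonempty.mpr zero_le_one) hQ.continuousOn
  have hx₀ : ‖x₀‖ = 1 := by simpa using hx₀
  refine ⟨-Q x₀, neg_pos.2 (hneg x₀ (norm_ne_zero_iff.1 (by simp [hx₀]))), fun x => ?_⟩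
  rcases eq_or_ne x 0 with rfl | hx
  · simp [hQ0]
  have hnx : ‖x‖ ≠ 0 := norm_ne_zero_iff.2 hx
  have hu : Q (‖x‖⁻¹ • x) ≤ Q x₀ := hmax (by simp [norm_smul, hnx])
  calc Q x = ‖x‖ ^ 2 * Q (‖x‖⁻¹ • x) := by
        rw [hhom, ← mul_assoc, ← mul_pow, mul_inv_cancel₀ hnx, one_pow, one_mul]
    _ ≤ ‖x‖ ^ 2 * Q x₀ := by gcongr
    _ = -(-Q x₀) * ‖x‖ ^ 2 := by ring

theorem Matrix.exists_pos_quadratic_le_neg_mul_sum_sq {ι : Type*} [Fintype ι]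
    {A : Matrix ι ι ℝ} (hA : ∀ x : ι → ℝ, x ≠ 0 → ∑ i, ∑ j, A i j * x i * x j < 0) :
    ∃ ε > 0, ∀ x : ι → ℝ, ∑ i, ∑ j, A i j * x i * x j ≤ -ε * ∑ i, x i ^ 2 := by
  obtain ⟨ε, hε, hQ⟩ := exists_pos_le_neg_mul_norm_sq
    (Q := fun x : EuclideanSpace ℝ ι => ∑ i, ∑ j, A i j * x i * x j) (by fun_prop)
    (fun t x => by
      simp only [PiLp.smul_apply, smul_eq_mul, Finset.mul_sum]
      exact Finset.sum_congr rfl fun i _ => Finset.sum_congr rfl fun j _ => by ring)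
    (fun x hx => hA _ (by simpa using hx))
  exact ⟨ε, hε, fun x => by simpa [EuclideanSpace.real_norm_sq_eq] using hQ (WithLp.toLp 2 x)⟩

theorem re_theta_exponent {ι : Type*} [Fintype ι] (B : Matrix ι ι ℂ) (x : ι → ℝ) (z : ι → ℂ) :
    ((1/2) * ∑ i, (∑ j, B i j * (x j : ℂ)) * (x i : ℂ) + ∑ i, (x i : ℂ) * z i).re
      = (1/2) * ∑ i, ∑ j, (B i j).re * x i * x j + ∑ i, x i * (z i).re := by
  simp only [one_div, Finset.sum_mul, Finset.mul_sum, Complex.add_re, Complex.re_sum,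
    Complex.mul_re, Complex.inv_re, Complex.re_ofNat, Complex.normSq_ofNat, div_self_mul_self',
    Complex.ofReal_re, Complex.ofReal_im, mul_zero, sub_zero, Complex.mul_im, zero_add,
    Complex.inv_im, Complex.im_ofNat, neg_zero, zero_div, zero_mul, add_left_inj]
  exact Finset.sum_congr rfl fun i _ => Finset.sum_congr rfl fun j _ => by ring

theorem theta_series_summable_general (g : ℕ)
    (B : Matrix (Fin g) (Fin g) ℂ)
    (hneg : ∀ x : Fin g → ℝ, x ≠ 0 → ∑ i, ∑ j, (B i j).re * x i * x j < 0)
    (z : Fin g → ℂ) :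
    Summable (fun m : Fin g → ℤ => Complex.exp
      ((1/2) * ∑ i, (∑ j, B i j * (m j : ℂ)) * (m i : ℂ) + ∑ i, (m i : ℂ) * z i)) := by
  obtain ⟨ε, hε, hQ⟩ := Matrix.exists_pos_quadratic_le_neg_mul_sum_sq (A := B.map Complex.re) hneg
  refine Summable.of_norm_bounded (summable_pi_prod_of_nonneg
    (f := fun i (n : ℤ) => Real.exp (-(ε / 2) * n ^ 2 + n * (z i).re))
    (fun _ _ => (Real.exp_pos _).le)
    fun i => summable_exp_neg_mul_sq_add_mul (half_pos hε) _) fun m => ?_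
  have hre := re_theta_exponent B (fun i => m i) z
  push_cast at hre
  have hquad := hQ fun i => m i
  simp only [Matrix.map_apply] at hquad
  rw [Complex.norm_exp, hre, ← Real.exp_sum, Finset.sum_add_distrib, ← Finset.mul_sum]
  exact Real.exp_le_exp.2 (by linarith)

/-- absolute convergence of the multi-dimensional theta series. -/
theorem theta_series_summable (g : ℕ) (hg : 1 ≤ g)
    (B : Matrix (Fin g) (Fin g) ℂ)
    (hsym : ∀ i j, B i j = B j i)
    (hneg : ∀ x : Fin g → ℝ, x ≠ 0 → ∑ i, ∑ j, (B i j).re * x i * x j < 0)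
    (z : Fin g → ℂ) :
    Summable (fun m : Fin g → ℤ => Complex.exp
      ((1/2) * ∑ i, (∑ j, B i j * (m j : ℂ)) * (m i : ℂ) + ∑ i, (m i : ℂ) * z i)) :=
  theta_series_summable_general g B hneg z
end

section
/- If the Riemann matrix satisfies conj(B) = B − 2πi H for an integer symmetric matrix H, then there exists a constant κ with |κ| = 1 such that conj(Θ(z)) = κ · Θ(conj(z) − πi diag(H)) for all z ∈ ℂ^g, where in fact one may take the relation conj(Θ(z)) = Θ(conj(z) − πi diag(H)) · exp(−½⟨B·0,0⟩) up to a root of unity depending only on H. -/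
/-!
Conjugate `Θ` term by term. Since `conj B = B - 2πi H`, the exponent of the `m`-th term becomes
`½⟨Bm,m⟩ - πi⟨Hm,m⟩ + ⟨m, conj z⟩`, and for symmetric integral `H` we have
`⟨Hm,m⟩ ≡ Σᵢ Hᵢᵢ mᵢ (mod 2)`: off-diagonal terms pair up and `mᵢ² ≡ mᵢ`. So the `m`-th term of
`conj Θ(z)` equals the `m`-th term of `Θ(conj z - πi diag H)`, and `κ = 1` works.
-/

open scoped BigOperators

noncomputable def theta (g : ℕ) (B : Matrix (Fin g) (Fin g) ℂ) (z : Fin g → ℂ) : ℂ :=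
  ∑' m : Fin g → ℤ, Complex.exp
    ((1/2) * ∑ i, (∑ j, B i j * (m j : ℂ)) * (m i : ℂ) + ∑ i, (m i : ℂ) * z i)

open Finset Complex Real

theorem CharTwo.sum_sum_eq_sum_diag {ι R : Type*} [CommRing R] [CharP R 2] [DecidableEq ι]
    (s : Finset ι) (f : ι → ι → R) (hf : ∀ i j, f i j = f j i) :
    ∑ i ∈ s, ∑ j ∈ s, f i j = ∑ i ∈ s, f i i := by
  induction s using Finset.induction_on with
  | empty => simp
  | insert a s ha ih =>
    have hcol : ∑ i ∈ s, f i a = ∑ j ∈ s, f a j := sum_congr rfl fun i _ => hf i a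
    simp only [sum_insert ha, sum_add_distrib, hcol, ← ih]
    linear_combination CharTwo.add_self_eq_zero (∑ j ∈ s, f a j)

theorem two_dvd_sum_sum_mul_sub_sum_diag {ι : Type*} [Fintype ι] (H : Matrix ι ι ℤ)
    (hH : ∀ i j, H i j = H j i) (m : ι → ℤ) :
    2 ∣ ∑ i, ∑ j, H i j * m j * m i - ∑ i, H i i * m i := by
  classical
  refine (ZMod.intCast_zmod_eq_zero_iff_dvd _ 2).mp ?_
  push_cast
  rw [CharTwo.sum_sum_eq_sum_diag _ _ fun i j => by rw [hH]; ring, sub_eq_zero]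
  refine sum_congr rfl fun i _ => ?_
  rw [mul_assoc, ← sq, ZMod.pow_card]

noncomputable def thetaSummand (g : ℕ) (B : Matrix (Fin g) (Fin g) ℂ) (z : Fin g → ℂ)
    (m : Fin g → ℤ) : ℂ :=
  exp ((1/2) * ∑ i, (∑ j, B i j * (m j : ℂ)) * (m i : ℂ) + ∑ i, (m i : ℂ) * z i)

theorem theta_eq_tsum_thetaSummand (g : ℕ) (B : Matrix (Fin g) (Fin g) ℂ) (z : Fin g → ℂ) :
    theta g B z = ∑' m, thetaSummand g B z m := rfl

theorem conj_thetaSummand {g : ℕ} {B : Matrix (Fin g) (Fin g) ℂ} {H : Matrix (Fin g) (Fin g) ℤ}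
    (hHsym : ∀ i j, H i j = H j i)
    (hBH : ∀ i j, starRingEnd ℂ (B i j) = B i j - 2 * π * I * H i j)
    (z : Fin g → ℂ) (m : Fin g → ℤ) :
    starRingEnd ℂ (thetaSummand g B z m)
      = thetaSummand g B (fun i => starRingEnd ℂ (z i) - π * I * H i i) m := by
  obtain ⟨k, hk⟩ := two_dvd_sum_sum_mul_sub_sum_diag H hHsym m
  have hkC : ∑ i, ∑ j, (H i j : ℂ) * m j * m i - ∑ i, (H i i : ℂ) * m i = 2 * k := by
    exact_mod_cast hk
  have hquad : ∑ i, (∑ j, starRingEnd ℂ (B i j) * m j) * m i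
      = ∑ i, (∑ j, B i j * m j) * m i - 2 * π * I * ∑ i, ∑ j, (H i j : ℂ) * m j * m i := by
    simp only [hBH, sub_mul, sum_sub_distrib, sum_mul, mul_sum]
    congr 1
    exact sum_congr rfl fun i _ => sum_congr rfl fun j _ => by ring
  have hlin : ∑ i, (m i : ℂ) * (starRingEnd ℂ (z i) - π * I * H i i)
      = ∑ i, (m i : ℂ) * starRingEnd ℂ (z i) - π * I * ∑ i, (H i i : ℂ) * m i := by
    simp only [mul_sub, sum_sub_distrib, mul_sum]
    congr 1
    exact sum_congr rfl fun i _ => by ring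
  rw [thetaSummand, thetaSummand, ← exp_conj, exp_eq_exp_iff_exists_int]
  refine ⟨-k, ?_⟩
  simp only [map_add, map_mul, map_sum, map_div₀, map_one, map_ofNat, map_intCast, hquad, hlin]
  push_cast
  linear_combination (-π * I) * hkC

theorem theta_conj_general (g : ℕ)
    (B : Matrix (Fin g) (Fin g) ℂ)
    (H : Matrix (Fin g) (Fin g) ℤ) (hHsym : ∀ i j, H i j = H j i)
    (hBH : ∀ i j, (starRingEnd ℂ) (B i j)
        = B i j - 2 * (Real.pi : ℂ) * Complex.I * (H i j : ℂ)) :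
    ∃ κ : ℂ, ‖κ‖ = 1 ∧ ∀ z : Fin g → ℂ,
      (starRingEnd ℂ) (theta g B z)
        = κ * theta g B
            (fun i => (starRingEnd ℂ) (z i) - (Real.pi : ℂ) * Complex.I * (H i i : ℂ)) := by
  refine ⟨1, norm_one, fun z => ?_⟩
  rw [one_mul, theta_eq_tsum_thetaSummand, theta_eq_tsum_thetaSummand, starRingEnd_apply,
    tsum_star]
  exact tsum_congr fun m => conj_thetaSummand hHsym hBH z m

/-- if `conj(B) = B − 2πi H` with `H` an integer symmetric matrix, then
there is a constant `κ` of modulus one (a root of unity depending only on `H`) with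
`conj(Θ(z)) = κ · Θ(conj(z) − πi diag(H))` for all `z`. -/
theorem theta_conj (g : ℕ) (hg : 1 ≤ g)
    (B : Matrix (Fin g) (Fin g) ℂ)
    (hsym : ∀ i j, B i j = B j i)
    (hneg : ∀ x : Fin g → ℝ, x ≠ 0 → ∑ i, ∑ j, (B i j).re * x i * x j < 0)
    (H : Matrix (Fin g) (Fin g) ℤ) (hHsym : ∀ i j, H i j = H j i)
    (hBH : ∀ i j, (starRingEnd ℂ) (B i j)
        = B i j - 2 * (Real.pi : ℂ) * Complex.I * (H i j : ℂ)) :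
    ∃ κ : ℂ, ‖κ‖ = 1 ∧ ∀ z : Fin g → ℂ,
      (starRingEnd ℂ) (theta g B z)
        = κ * theta g B
            (fun i => (starRingEnd ℂ) (z i) - (Real.pi : ℂ) * Complex.I * (H i i : ℂ)) :=
  theta_conj_general g B H hHsym hBH
end

section
/- Let x : ℝ → ℝ and u : ℝ → ℝ be real-analytic near y₀, with x(y) − x(y₀) having a zero of exact order 2n+1 at y₀ (n ≥ 1) and u(y) − u(y₀) having a zero of exact order 2n at y₀. Then, for the inverse function y(x) defined near x₀ = x(y₀), one has y(x) − y₀ = O(|x − x₀|^{1/(2n+1)}) and u(y(x)) − u(y₀) = O(|x − x₀|^{2n/(2n+1)}) as x → x₀. -/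
/-!
Near `y₀` write `x y - x y₀ = (y - y₀) ^ (2n+1) * g y` with `g y₀ ≠ 0`, so that
`|y - y₀| ^ (2n+1) = O(|x y - x y₀|)`. Substituting `y = yinv s` (so `x y = s`) and taking
`(2n+1)`-th roots gives the first bound. The second follows by composing it with
`u y - u y₀ = O((y - y₀) ^ (2n))`, which holds because `u - u y₀` vanishes to order `2n`.
-/

open Asymptotics
open Filter Topology

section AnalyticOrder

variable {𝕜 E : Type*} [NontriviallyNormedField 𝕜] [NormedAddCommGroup E] [NormedSpace 𝕜 E]
  {f : 𝕜 → E} {z₀ : 𝕜} {n : ℕ}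

theorem AnalyticAt.analyticOrderAt_eq_of_iteratedDeriv [CharZero 𝕜] [CompleteSpace E]
    (hf : AnalyticAt 𝕜 f z₀) (hz : ∀ i < n, iteratedDeriv i f z₀ = 0)
    (hn : iteratedDeriv n f z₀ ≠ 0) : analyticOrderAt f z₀ = n := by
  rw [← natCast_le_analyticOrderAt_iff_iteratedDeriv_eq_zero hf] at hz
  refine le_antisymm (ENat.lt_natCast_add_one_iff.1 (not_le.1 fun h => hn ?_)) hz
  rw [← Nat.cast_add_one, natCast_le_analyticOrderAt_iff_iteratedDeriv_eq_zero hf] at h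
  exact h n n.lt_add_one

theorem AnalyticAt.isBigO_sub_pow_of_le_analyticOrderAt (hf : AnalyticAt 𝕜 f z₀)
    (hn : n ≤ analyticOrderAt f z₀) : f =O[𝓝 z₀] fun z => (z - z₀) ^ n := by
  obtain ⟨g, hg, hfg⟩ := (natCast_le_analyticOrderAt hf).1 hn
  have hg_one : g =O[𝓝 z₀] fun _ => (1 : 𝕜) := hg.continuousAt.tendsto.isBigO_one 𝕜
  refine ((isBigO_refl (fun z => (z - z₀) ^ n) _).smul hg_one).congr'
    (hfg.mono fun _ h => h.symm) (Eventually.of_forall fun z => ?_)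
  simp only [smul_eq_mul, mul_one]

theorem AnalyticAt.pow_sub_isBigO_of_analyticOrderAt_eq (hf : AnalyticAt 𝕜 f z₀)
    (hn : analyticOrderAt f z₀ = n) : (fun z => (z - z₀) ^ n) =O[𝓝 z₀] f := by
  obtain ⟨g, hg, hg₀, hfg⟩ := hf.analyticOrderAt_eq_natCast.1 hn
  have hg_bdd : ∀ᶠ z in 𝓝 z₀, ‖g z₀‖ / 2 ≤ ‖g z‖ :=
    hg.continuousAt.norm.eventually (le_mem_nhds (half_lt_self (norm_pos_iff.2 hg₀)))
  have one_g : (fun _ => (1 : 𝕜)) =O[𝓝 z₀] g :=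
    (isBigO_const_left_iff_pos_le_norm one_ne_zero).2 ⟨_, by positivity, hg_bdd⟩
  refine ((isBigO_refl (fun z => (z - z₀) ^ n) _).smul one_g).congr'
    (Eventually.of_forall fun z => ?_) (hfg.mono fun _ h => h.symm)
  simp only [smul_eq_mul, mul_one]

end AnalyticOrder

theorem isBigO_rpow_inv_of_rightInverse {l : Filter ℝ} {x y : ℝ → ℝ} {y₀ : ℝ} {m : ℕ}
    (hm : m ≠ 0) (hx : (fun t => (t - y₀) ^ m) =O[𝓝 y₀] fun t => x t - x y₀)
    (hy : Tendsto y l (𝓝 y₀)) (hxy : ∀ᶠ s in l, x (y s) = s) :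
    (fun s => y s - y₀) =O[l] fun s => |s - x y₀| ^ (m⁻¹ : ℝ) := by
  have hpow : (fun s => |y s - y₀| ^ m) =O[l] fun s => |s - x y₀| := by
    refine (hx.comp_tendsto hy).norm_norm.congr' ?_ ?_
    · exact Eventually.of_forall fun s => by simp
    · filter_upwards [hxy] with s hs
      simp [hs]
  refine isBigO_abs_left.1 ((hpow.rpow (by positivity) ?_).congr_left fun s => ?_)
  · exact Eventually.of_forall fun s => abs_nonneg _
  · exact Real.pow_rpow_inv_natCast (abs_nonneg _) hm

theorem cusp_singularity_general (n : ℕ) (x u : ℝ → ℝ) (y₀ : ℝ)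
    (hx : AnalyticAt ℝ x y₀) (hu : AnalyticAt ℝ u y₀)
    (hxz : ∀ j < 2 * n + 1, iteratedDeriv j (fun y => x y - x y₀) y₀ = 0)
    (hxn : iteratedDeriv (2 * n + 1) (fun y => x y - x y₀) y₀ ≠ 0)
    (huz : ∀ j < 2 * n, iteratedDeriv j (fun y => u y - u y₀) y₀ = 0)
    (yinv : ℝ → ℝ) (hyc : ContinuousAt yinv (x y₀)) (hy0 : yinv (x y₀) = y₀)
    (hinv : ∀ᶠ s in nhds (x y₀), x (yinv s) = s) :
    ((fun s => yinv s - y₀) =O[nhds (x y₀)]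
        fun s => |s - x y₀| ^ ((1 : ℝ) / (2 * n + 1))) ∧
    ((fun s => u (yinv s) - u y₀) =O[nhds (x y₀)]
        fun s => |s - x y₀| ^ ((2 * n : ℝ) / (2 * n + 1))) := by
  have hx' : AnalyticAt ℝ (fun y => x y - x y₀) y₀ := hx.fun_sub analyticAt_const
  have hu' : AnalyticAt ℝ (fun y => u y - u y₀) y₀ := hu.fun_sub analyticAt_const
  have hy : Tendsto yinv (𝓝 (x y₀)) (𝓝 y₀) := by
    simpa only [hy0] using hyc.tendsto
  have hyinv := isBigO_rpow_inv_of_rightInverse (2 * n).succ_ne_zero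
    (hx'.pow_sub_isBigO_of_analyticOrderAt_eq (hx'.analyticOrderAt_eq_of_iteratedDeriv hxz hxn))
    hy hinv
  have hexp : (((2 * n + 1 : ℕ) : ℝ)⁻¹) = 1 / (2 * n + 1) := by push_cast; rw [one_div]
  rw [hexp] at hyinv
  refine ⟨hyinv, ?_⟩
  have hu_pow := (hu'.isBigO_sub_pow_of_le_analyticOrderAt
    ((natCast_le_analyticOrderAt_iff_iteratedDeriv_eq_zero hu').2 huz)).comp_tendsto hy
  refine (hu_pow.trans (hyinv.pow (2 * n))).congr_right fun s => ?_
  rw [← Real.rpow_natCast, ← Real.rpow_mul (abs_nonneg _)]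
  push_cast
  ring_nf

/-- cusp-type singularity analysis. If `x` has a zero of exact order
`2n+1` and `u` a zero of exact order `2n` at `y₀`, then the local inverse `y(x)`
satisfies `y(x) − y₀ = O(|x − x₀|^{1/(2n+1)})` and
`u(y(x)) − u(y₀) = O(|x − x₀|^{2n/(2n+1)})` as `x → x₀ = x(y₀)`. -/
theorem cusp_singularity (n : ℕ) (hn : 1 ≤ n) (x u : ℝ → ℝ) (y₀ : ℝ)
    (hx : AnalyticAt ℝ x y₀) (hu : AnalyticAt ℝ u y₀)
    (hxz : ∀ j < 2 * n + 1, iteratedDeriv j (fun y => x y - x y₀) y₀ = 0)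
    (hxn : iteratedDeriv (2 * n + 1) (fun y => x y - x y₀) y₀ ≠ 0)
    (huz : ∀ j < 2 * n, iteratedDeriv j (fun y => u y - u y₀) y₀ = 0)
    (hun : iteratedDeriv (2 * n) (fun y => u y - u y₀) y₀ ≠ 0)
    (yinv : ℝ → ℝ) (hyc : ContinuousAt yinv (x y₀)) (hy0 : yinv (x y₀) = y₀)
    (hinv : ∀ᶠ s in nhds (x y₀), x (yinv s) = s) :
    ((fun s => yinv s - y₀) =O[nhds (x y₀)]
        fun s => |s - x y₀| ^ ((1 : ℝ) / (2 * n + 1))) ∧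
    ((fun s => u (yinv s) - u y₀) =O[nhds (x y₀)]
        fun s => |s - x y₀| ^ ((2 * n : ℝ) / (2 * n + 1))) :=
  cusp_singularity_general n x u y₀ hx hu hxz hxn huz yinv hyc hy0 hinv
end

section
/- The function u(x,t) = c·exp(−|x − ct|) is a weak (distributional) traveling-wave solution of the dispersionless Camassa–Holm equation u_t + 3 u u_x = u_{xxt} + 2 u_x u_{xx} + u u_{xxx}, in the sense that for every smooth compactly supported test function φ(x,t), the weak formulation ∫∫ [u φ_t + (3/2)u² φ_x − u φ_{xxt} − (u u_x)_x? ] holds after moving all derivatives onto φ; equivalently, m = u − u_{xx} = 2c δ(x − ct) satisfies m_t + (u m)_x + m u_x = 0 distributionally. -/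
open MeasureTheory

/-- Partial derivative in the first (space) variable. -/
noncomputable def pdx (f : ℝ → ℝ → ℝ) : ℝ → ℝ → ℝ :=
  fun x t => deriv (fun y => f y t) x

/-- Partial derivative in the second (time) variable. -/
noncomputable def pdt (f : ℝ → ℝ → ℝ) : ℝ → ℝ → ℝ :=
  fun x t => deriv (fun s => f x s) t

namespace PeakonAux

open Filter Topology Set ContDiff

/-- directional derivative operator -/
noncomputable def Dv (v : ℝ × ℝ) (f : ℝ × ℝ → ℝ) : ℝ × ℝ → ℝ := fun p => fderiv ℝ f p v

lemma contDiff_Dv {f : ℝ × ℝ → ℝ} (hf : ContDiff ℝ ∞ f) (v : ℝ × ℝ) :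
    ContDiff ℝ ∞ (Dv v f) :=
  (hf.fderiv_right (le_of_eq (by exact_mod_cast rfl))).clm_apply contDiff_const

lemma hcs_Dv {f : ℝ × ℝ → ℝ} (hf : HasCompactSupport f) (v : ℝ × ℝ) :
    HasCompactSupport (Dv v f) :=
  (hf.fderiv (𝕜 := ℝ)).comp_left (g := fun L : ℝ × ℝ →L[ℝ] ℝ => L v) rfl

lemma Dv_eq_zero {f : ℝ × ℝ → ℝ} (v : ℝ × ℝ) {p : ℝ × ℝ} (hp : p ∉ tsupport f) :
    Dv v f p = 0 := by
  have h0 : f =ᶠ[𝓝 p] 0 := notMem_tsupport_iff_eventuallyEq.mp hp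
  show fderiv ℝ f p v = 0
  rw [h0.fderiv_eq]
  rw [show (0 : ℝ × ℝ → ℝ) = fun _ => (0:ℝ) from rfl, fderiv_fun_const]
  rfl

lemma tsupport_Dv_subset (v : ℝ × ℝ) (f : ℝ × ℝ → ℝ) :
    tsupport (Dv v f) ⊆ tsupport f := by
  apply closure_minimal ?_ (isClosed_tsupport f)
  intro p hp
  by_contra hq
  exact hp (Dv_eq_zero v hq)

lemma hasDerivAt_slice1 {f : ℝ × ℝ → ℝ} (hf : ContDiff ℝ ∞ f) (x t : ℝ) :
    HasDerivAt (fun y => f (y, t)) (Dv (1, 0) f (x, t)) x := by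
  have h1 : HasDerivAt (fun y : ℝ => (y, t)) ((1 : ℝ), (0 : ℝ)) x :=
    (hasDerivAt_id x).prodMk (hasDerivAt_const x t)
  exact ((hf.differentiable (by simp) (x, t)).hasFDerivAt).comp_hasDerivAt x h1

lemma hasDerivAt_slice2 {f : ℝ × ℝ → ℝ} (hf : ContDiff ℝ ∞ f) (x t : ℝ) :
    HasDerivAt (fun s => f (x, s)) (Dv (0, 1) f (x, t)) t := by
  have h1 : HasDerivAt (fun s : ℝ => (x, s)) ((0 : ℝ), (1 : ℝ)) t :=
    (hasDerivAt_const t x).prodMk (hasDerivAt_id t)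
  exact ((hf.differentiable (by simp) (x, t)).hasFDerivAt).comp_hasDerivAt t h1

lemma hasDerivAt_shift1 {f : ℝ × ℝ → ℝ} (hf : ContDiff ℝ ∞ f) (a y t : ℝ) :
    HasDerivAt (fun y => f (y + a, t)) (Dv (1, 0) f (y + a, t)) y := by
  have h1 : HasDerivAt (fun y : ℝ => (y + a, t)) ((1 : ℝ), (0 : ℝ)) y :=
    ((hasDerivAt_id y).add_const a).prodMk (hasDerivAt_const y t)
  exact ((hf.differentiable (by simp) (y + a, t)).hasFDerivAt).comp_hasDerivAt
    y h1

lemma hasDerivAt_frame {f : ℝ × ℝ → ℝ} (hf : ContDiff ℝ ∞ f) (c y t : ℝ) :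
    HasDerivAt (fun s => f (y + c * s, s))
      (c * Dv (1, 0) f (y + c * t, t) + Dv (0, 1) f (y + c * t, t)) t := by
  have h1 : HasDerivAt (fun s : ℝ => (y + c * s, s)) ((c : ℝ), (1 : ℝ)) t := by
    simpa using (((hasDerivAt_id t).const_mul c).const_add y).prodMk (hasDerivAt_id t)
  have h2 : HasDerivAt (fun s => f (y + c * s, s)) (fderiv ℝ f (y + c * t, t) (c, 1)) t :=
    ((hf.differentiable (by simp)
      (y + c * t, t)).hasFDerivAt).comp_hasDerivAt_of_eq t h1 rfl
  have h3 : fderiv ℝ f (y + c * t, t) (c, 1)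
      = c * Dv (1, 0) f (y + c * t, t) + Dv (0, 1) f (y + c * t, t) := by
    have : ((c : ℝ), (1 : ℝ)) = c • ((1 : ℝ), (0 : ℝ)) + ((0 : ℝ), (1 : ℝ)) := by
      simp [Prod.ext_iff]
    rw [this, ContinuousLinearMap.map_add, ContinuousLinearMap.map_smul, smul_eq_mul]
    rfl
  rwa [h3] at h2

/-- compact support via a section -/
lemma hcs_pre {α β : Type*} [TopologicalSpace α] [TopologicalSpace β] [T2Space α]
    {f : α → ℝ} {K : Set β} (hK : IsCompact K) {e : α → β} {π : β → α} (hπ : Continuous π)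
    (hid : ∀ y, π (e y) = y) (h0 : ∀ y, e y ∉ K → f y = 0) : HasCompactSupport f := by
  apply IsCompact.of_isClosed_subset (hK.image hπ) (isClosed_tsupport f)
  apply closure_minimal ?_ (hK.image hπ).isClosed
  intro y hy
  have hyK : e y ∈ K := by
    by_contra hcon
    exact hy (h0 y hcon)
  exact ⟨e y, hyK, hid y⟩

lemma integral_deriv_zero {g : ℝ → ℝ} (hg : ContDiff ℝ ∞ g) (hs : HasCompactSupport g) :
    ∫ t : ℝ, deriv g t = 0 := by
  have h1le : (1 : WithTop ℕ∞) ≤ ∞ := by exact_mod_cast le_top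
  have hint : Integrable (deriv g) :=
    (hg.continuous_deriv h1le).integrable_of_hasCompactSupport hs.deriv
  have h2 := intervalIntegral.integral_Iic_add_Ioi (b := (0 : ℝ)) hint.integrableOn
    hint.integrableOn
  rw [hs.integral_Iic_deriv_eq (hg.of_le h1le) 0,
    hs.integral_Ioi_deriv_eq (hg.of_le h1le) 0] at h2
  linarith

lemma sign_sq {s : ℝ} (hs : s ≠ 0) : (Real.sign s) ^ 2 = 1 := by
  rcases lt_or_gt_of_ne hs with h | h
  · rw [Real.sign_of_neg h]; norm_num
  · rw [Real.sign_of_pos h]; norm_num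

lemma tendsto_zero_atTop_of_hcs {F : ℝ → ℝ} (hF : HasCompactSupport F) :
    Tendsto F atTop (𝓝 0) := by
  rw [hasCompactSupport_iff_eventuallyEq, Filter.coclosedCompact_eq_cocompact] at hF
  exact hF.filter_mono _root_.atTop_le_cocompact |>.tendsto

lemma tendsto_zero_atBot_of_hcs {F : ℝ → ℝ} (hF : HasCompactSupport F) :
    Tendsto F atBot (𝓝 0) := by
  rw [hasCompactSupport_iff_eventuallyEq, Filter.coclosedCompact_eq_cocompact] at hF
  exact hF.filter_mono _root_.atBot_le_cocompact |>.tendsto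

lemma ibp2 {h : ℝ → ℝ} (hh : ContDiff ℝ ∞ h) (hs : HasCompactSupport h) {b : ℝ} (hb : 0 < b) :
    ∫ y : ℝ, Real.exp (-(b * |y|)) * deriv (deriv h) y
      = b ^ 2 * (∫ y : ℝ, Real.exp (-(b * |y|)) * h y) - 2 * b * h 0 := by
  have h1le : (1 : WithTop ℕ∞) ≤ ∞ := by exact_mod_cast le_top
  have hd1 : ContDiff ℝ ∞ (deriv h) := (contDiff_infty_iff_deriv.mp hh).2
  have hd2 : ContDiff ℝ ∞ (deriv (deriv h)) := (contDiff_infty_iff_deriv.mp hd1).2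
  have hdh : ∀ y, HasDerivAt h (deriv h y) y := fun y => (hh.differentiable (by simp) y).hasDerivAt
  have hdh' : ∀ y, HasDerivAt (deriv h) (deriv (deriv h) y) y :=
    fun y => (hd1.differentiable (by simp) y).hasDerivAt
  have hE : Continuous fun y : ℝ => Real.exp (-(b * |y|)) := by fun_prop
  have hEp : Continuous fun y : ℝ => Real.exp (-(b * y)) := by fun_prop
  have hEm : Continuous fun y : ℝ => Real.exp (b * y) := by fun_prop
  have intEh'' : Integrable (fun y => Real.exp (-(b * |y|)) * deriv (deriv h) y) :=
    (hE.mul hd2.continuous).integrable_of_hasCompactSupport hs.deriv.deriv.mul_left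
  have intEh : Integrable (fun y => Real.exp (-(b * |y|)) * h y) :=
    (hE.mul hh.continuous).integrable_of_hasCompactSupport hs.mul_left
  -- the Ioi side
  set F : ℝ → ℝ := fun y => Real.exp (-(b * y)) * (deriv h y + b * h y) with hFdef
  have hF : ∀ y, HasDerivAt F
      (Real.exp (-(b * y)) * deriv (deriv h) y - b ^ 2 * (Real.exp (-(b * y)) * h y)) y := by
    intro y
    have he0 : HasDerivAt (fun y : ℝ => -(b * y)) (-b) y := by
      exact ((hasDerivAt_id y).const_mul b).neg.congr_deriv (by simp)
    have he : HasDerivAt (fun y => Real.exp (-(b * y))) (-b * Real.exp (-(b * y))) y := by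
      simpa [mul_comm] using he0.exp
    have hsum : HasDerivAt (fun y => deriv h y + b * h y)
        (deriv (deriv h) y + b * deriv h y) y := (hdh' y).add ((hdh y).const_mul b)
    have := he.mul hsum
    exact this.congr_deriv (by ring)
  have hbh : HasCompactSupport (fun y => b * h y) := hs.mul_left
  have hcsF : HasCompactSupport F := (hs.deriv.add hbh).mul_left
  have hFt : Tendsto F atTop (𝓝 0) := tendsto_zero_atTop_of_hcs hcsF
  have intF' : Integrable (fun y =>
      Real.exp (-(b * y)) * deriv (deriv h) y - b ^ 2 * (Real.exp (-(b * y)) * h y)) := by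
    exact ((hEp.mul hd2.continuous).integrable_of_hasCompactSupport hs.deriv.deriv.mul_left).sub
      (((hEp.mul hh.continuous).integrable_of_hasCompactSupport hs.mul_left).const_mul _)
  have hIoi := integral_Ioi_of_hasDerivAt_of_tendsto' (a := (0:ℝ)) (fun y _ => hF y)
    intF'.integrableOn hFt
  have hIoi2 : (∫ y in Ioi (0:ℝ), Real.exp (-(b * |y|)) * deriv (deriv h) y)
      - b ^ 2 * ∫ y in Ioi (0:ℝ), Real.exp (-(b * |y|)) * h y
      = -(deriv h 0 + b * h 0) := by
    have e1 : ∀ y ∈ Ioi (0:ℝ),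
        Real.exp (-(b * y)) * deriv (deriv h) y - b ^ 2 * (Real.exp (-(b * y)) * h y)
        = Real.exp (-(b * |y|)) * deriv (deriv h) y
          - b ^ 2 * (Real.exp (-(b * |y|)) * h y) := by
      intro y hy; rw [abs_of_pos hy]
    rw [setIntegral_congr_fun measurableSet_Ioi e1] at hIoi
    rw [integral_sub intEh''.integrableOn (intEh.integrableOn.const_mul _)] at hIoi
    rw [integral_const_mul _ _] at hIoi
    rw [hIoi]
    simp [hFdef]
  -- the Iic side
  set G : ℝ → ℝ := fun y => Real.exp (b * y) * (deriv h y - b * h y) with hGdef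
  have hG : ∀ y, HasDerivAt G
      (Real.exp (b * y) * deriv (deriv h) y - b ^ 2 * (Real.exp (b * y) * h y)) y := by
    intro y
    have he0 : HasDerivAt (fun y : ℝ => b * y) b y := by
      simpa using (hasDerivAt_id y).const_mul b
    have he : HasDerivAt (fun y => Real.exp (b * y)) (b * Real.exp (b * y)) y := by
      simpa [mul_comm] using he0.exp
    have hsum : HasDerivAt (fun y => deriv h y - b * h y)
        (deriv (deriv h) y - b * deriv h y) y := (hdh' y).sub ((hdh y).const_mul b)
    have := he.mul hsum
    exact this.congr_deriv (by ring)
  have hGin : HasCompactSupport (fun y => deriv h y - b * h y) := by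
    rw [show (fun y => deriv h y - b * h y) = fun y => deriv h y + (-b) * h y from
      funext fun y => by ring]
    exact hs.deriv.add hs.mul_left
  have hcsG : HasCompactSupport G := hGin.mul_left
  have hGt : Tendsto G atBot (𝓝 0) := tendsto_zero_atBot_of_hcs hcsG
  have intG' : Integrable (fun y =>
      Real.exp (b * y) * deriv (deriv h) y - b ^ 2 * (Real.exp (b * y) * h y)) := by
    exact ((hEm.mul hd2.continuous).integrable_of_hasCompactSupport hs.deriv.deriv.mul_left).sub
      (((hEm.mul hh.continuous).integrable_of_hasCompactSupport hs.mul_left).const_mul _)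
  have hIic := integral_Iic_of_hasDerivAt_of_tendsto' (a := (0:ℝ)) (fun y _ => hG y)
    intG'.integrableOn hGt
  have hIic2 : (∫ y in Iic (0:ℝ), Real.exp (-(b * |y|)) * deriv (deriv h) y)
      - b ^ 2 * ∫ y in Iic (0:ℝ), Real.exp (-(b * |y|)) * h y
      = deriv h 0 - b * h 0 := by
    have e1 : ∀ y ∈ Iic (0:ℝ),
        Real.exp (b * y) * deriv (deriv h) y - b ^ 2 * (Real.exp (b * y) * h y)
        = Real.exp (-(b * |y|)) * deriv (deriv h) y
          - b ^ 2 * (Real.exp (-(b * |y|)) * h y) := by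
      intro y hy
      rw [abs_of_nonpos hy]
      ring_nf
    rw [setIntegral_congr_fun measurableSet_Iic e1] at hIic
    rw [integral_sub intEh''.integrableOn (intEh.integrableOn.const_mul _)] at hIic
    rw [integral_const_mul _ _] at hIic
    rw [hIic]
    simp [hGdef]
  have split1 := intervalIntegral.integral_Iic_add_Ioi (b := (0:ℝ)) intEh''.integrableOn
    intEh''.integrableOn
  have split2 := intervalIntegral.integral_Iic_add_Ioi (b := (0:ℝ)) intEh.integrableOn
    intEh.integrableOn
  linear_combination hIoi2 + hIic2 - split1 + b ^ 2 * split2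

/-- the fixed-time spatial integration by parts: integrability and vanishing -/
lemma spatial (c t : ℝ) {Φ1 : ℝ × ℝ → ℝ} (hΦ1 : ContDiff ℝ ∞ Φ1)
    (hΦ1s : HasCompactSupport Φ1) :
    Integrable (fun y : ℝ =>
        (c * Real.exp (-|y|)) * (c * Dv (1,0) (Dv (1,0) Φ1) (y + c*t, t) - c * Φ1 (y + c*t, t))
        + 2 * (c * Real.exp (-|y|))^2 * Φ1 (y + c*t, t)
        - (1/2) * (c * Real.exp (-|y|))^2 * Dv (1,0) (Dv (1,0) Φ1) (y + c*t, t)) ∧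
    (∫ y : ℝ,
        ((c * Real.exp (-|y|)) * (c * Dv (1,0) (Dv (1,0) Φ1) (y + c*t, t) - c * Φ1 (y + c*t, t))
        + 2 * (c * Real.exp (-|y|))^2 * Φ1 (y + c*t, t)
        - (1/2) * (c * Real.exp (-|y|))^2 * Dv (1,0) (Dv (1,0) Φ1) (y + c*t, t))) = 0 := by
  set h : ℝ → ℝ := fun y => Φ1 (y + c*t, t) with hhdef
  have hmap : ContDiff ℝ ∞ (fun y : ℝ => (y + c*t, t)) :=
    (contDiff_id.add contDiff_const).prodMk contDiff_const
  have hh : ContDiff ℝ ∞ h := hΦ1.comp hmap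
  have hhs : HasCompactSupport h :=
    hcs_pre hΦ1s (e := fun y => (y + c*t, t)) (π := fun p : ℝ × ℝ => p.1 - c*t) (by fun_prop)
      (fun y => by simp) (fun y hy => image_eq_zero_of_notMem_tsupport (f := Φ1) hy)
  have hd1 : deriv h = fun y => Dv (1,0) Φ1 (y + c*t, t) :=
    funext fun y => (hasDerivAt_shift1 hΦ1 (c*t) y t).deriv
  have hd2 : deriv (deriv h) = fun y => Dv (1,0) (Dv (1,0) Φ1) (y + c*t, t) := by
    rw [hd1]
    exact funext fun y => (hasDerivAt_shift1 (contDiff_Dv hΦ1 (1,0)) (c*t) y t).deriv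
  have hh2 : ContDiff ℝ ∞ (deriv (deriv h)) :=
    (contDiff_infty_iff_deriv.mp (contDiff_infty_iff_deriv.mp hh).2).2
  have key : (fun y : ℝ =>
        (c * Real.exp (-|y|)) * (c * Dv (1,0) (Dv (1,0) Φ1) (y + c*t, t) - c * Φ1 (y + c*t, t))
        + 2 * (c * Real.exp (-|y|))^2 * Φ1 (y + c*t, t)
        - (1/2) * (c * Real.exp (-|y|))^2 * Dv (1,0) (Dv (1,0) Φ1) (y + c*t, t))
      = fun y : ℝ =>
        c^2 * (Real.exp (-(1*|y|)) * deriv (deriv h) y) - c^2 * (Real.exp (-(1*|y|)) * h y)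
        + 2 * c^2 * (Real.exp (-(2*|y|)) * h y)
        - (1/2) * c^2 * (Real.exp (-(2*|y|)) * deriv (deriv h) y) := by
    funext y
    simp only [hd2]
    simp only [hhdef]
    have e2 : Real.exp (-(2*|y|)) = Real.exp (-|y|) ^ 2 := by
      rw [sq, ← Real.exp_add]; ring_nf
    have e1 : Real.exp (-(1*|y|)) = Real.exp (-|y|) := by norm_num
    rw [e1, e2]
    ring
  have hE1 : Continuous fun y : ℝ => Real.exp (-(1*|y|)) := by fun_prop
  have hE2 : Continuous fun y : ℝ => Real.exp (-(2*|y|)) := by fun_prop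
  have i1 : Integrable (fun y => Real.exp (-(1*|y|)) * deriv (deriv h) y) :=
    (hE1.mul hh2.continuous).integrable_of_hasCompactSupport hhs.deriv.deriv.mul_left
  have i2 : Integrable (fun y => Real.exp (-(1*|y|)) * h y) :=
    (hE1.mul hh.continuous).integrable_of_hasCompactSupport hhs.mul_left
  have i3 : Integrable (fun y => Real.exp (-(2*|y|)) * h y) :=
    (hE2.mul hh.continuous).integrable_of_hasCompactSupport hhs.mul_left
  have i4 : Integrable (fun y => Real.exp (-(2*|y|)) * deriv (deriv h) y) :=
    (hE2.mul hh2.continuous).integrable_of_hasCompactSupport hhs.deriv.deriv.mul_left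
  constructor
  · rw [key]
    exact (((i1.const_mul _).sub (i2.const_mul _)).add (i3.const_mul _)).sub (i4.const_mul _)
  · rw [key]
    have hA1 : Integrable (fun y : ℝ =>
        c^2 * (Real.exp (-(1*|y|)) * deriv (deriv h) y)
          - c^2 * (Real.exp (-(1*|y|)) * h y)) := (i1.const_mul _).sub (i2.const_mul _)
    have hA2 : Integrable (fun y : ℝ =>
        c^2 * (Real.exp (-(1*|y|)) * deriv (deriv h) y) - c^2 * (Real.exp (-(1*|y|)) * h y)
          + 2 * c^2 * (Real.exp (-(2*|y|)) * h y)) := hA1.add (i3.const_mul _)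
    rw [integral_sub hA2 (i4.const_mul _),
      integral_add hA1 (i3.const_mul _),
      integral_sub (i1.const_mul _) (i2.const_mul _),
      integral_const_mul, integral_const_mul, integral_const_mul, integral_const_mul]
    have I1 := ibp2 hh hhs (b := 1) one_pos
    have I2 := ibp2 hh hhs (b := 2) two_pos
    rw [I1, I2]
    ring

lemma pdx_eq {f : ℝ × ℝ → ℝ} (hf : ContDiff ℝ ∞ f) {g : ℝ → ℝ → ℝ}
    (hg : ∀ x t, g x t = f (x, t)) (x t : ℝ) : pdx g x t = Dv (1,0) f (x, t) := by
  show deriv (fun y => g y t) x = _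
  rw [show (fun y => g y t) = fun y => f (y, t) from funext fun y => hg y t]
  exact (hasDerivAt_slice1 hf x t).deriv

lemma pdt_eq {f : ℝ × ℝ → ℝ} (hf : ContDiff ℝ ∞ f) {g : ℝ → ℝ → ℝ}
    (hg : ∀ x t, g x t = f (x, t)) (x t : ℝ) : pdt g x t = Dv (0,1) f (x, t) := by
  show deriv (fun s => g x s) t = _
  rw [show (fun s => g x s) = fun s => f (x, s) from funext fun s => hg x s]
  exact (hasDerivAt_slice2 hf x t).deriv

end PeakonAux

open PeakonAux Filter Topology Set ContDiff in
/-- the peakon `u(x,t) = c e^{−|x−ct|}` is a weak (distributional)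
traveling-wave solution of the dispersionless Camassa–Holm equation
`u_t + 3uu_x = u_{xxt} + 2u_x u_{xx} + u u_{xxx}`: for every smooth compactly
supported test function `φ`, after moving all derivatives onto `φ`,
`∫∫ [u φ_t − u φ_{xxt} + (3/2)u² φ_x + (1/2)u_x² φ_x − (1/2)u² φ_{xxx}] dx dt = 0`,
where `u_x(x,t) = −sgn(x−ct) u(x,t)` is the a.e. spatial derivative of `u`. -/
theorem peakon_weak_solution (c : ℝ) (hc : 0 < c)
    (u ux : ℝ → ℝ → ℝ)
    (hu : ∀ x t, u x t = c * Real.exp (-|x - c * t|))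
    (hux : ∀ x t, ux x t = -(Real.sign (x - c * t)) * u x t)
    (φ : ℝ → ℝ → ℝ)
    (hφ : ContDiff ℝ (⊤ : ℕ∞) (fun p : ℝ × ℝ => φ p.1 p.2))
    (hsupp : HasCompactSupport (fun p : ℝ × ℝ => φ p.1 p.2)) :
    ∫ t : ℝ, ∫ x : ℝ,
      (u x t * pdt φ x t
        - u x t * pdt (pdx (pdx φ)) x t
        + (3 / 2) * (u x t) ^ 2 * pdx φ x t
        + (1 / 2) * (ux x t) ^ 2 * pdx φ x t
        - (1 / 2) * (u x t) ^ 2 * pdx (pdx (pdx φ)) x t) = 0 := by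
  set Φ : ℝ × ℝ → ℝ := fun p => φ p.1 p.2 with hΦdef
  have hΦ : ContDiff ℝ ∞ Φ := hφ.of_le (by simp)
  have hΦs : HasCompactSupport Φ := hsupp
  set Φ1 : ℝ × ℝ → ℝ := Dv (1,0) Φ with hΦ1def
  set Φ11 : ℝ × ℝ → ℝ := Dv (1,0) Φ1 with hΦ11def
  set Φ111 : ℝ × ℝ → ℝ := Dv (1,0) Φ11 with hΦ111def
  have hΦ1 : ContDiff ℝ ∞ Φ1 := contDiff_Dv hΦ _
  have hΦ11 : ContDiff ℝ ∞ Φ11 := contDiff_Dv hΦ1 _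
  have hΦ111 : ContDiff ℝ ∞ Φ111 := contDiff_Dv hΦ11 _
  have hΦ1s : HasCompactSupport Φ1 := hcs_Dv hΦs _
  have hΦ11s : HasCompactSupport Φ11 := hcs_Dv hΦ1s _
  -- pd rewrites
  have e1 : ∀ x t, pdx φ x t = Φ1 (x, t) := fun x t => pdx_eq hΦ (fun _ _ => rfl) x t
  have e11 : ∀ x t, pdx (pdx φ) x t = Φ11 (x, t) := fun x t => pdx_eq hΦ1 e1 x t
  have e111 : ∀ x t, pdx (pdx (pdx φ)) x t = Φ111 (x, t) := fun x t => pdx_eq hΦ11 e11 x t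
  have et : ∀ x t, pdt φ x t = Dv (0,1) Φ (x, t) := fun x t => pdt_eq hΦ (fun _ _ => rfl) x t
  have e11t : ∀ x t, pdt (pdx (pdx φ)) x t = Dv (0,1) Φ11 (x, t) :=
    fun x t => pdt_eq hΦ11 e11 x t
  -- the time part of the transformed integrand
  set W : ℝ → ℝ → ℝ := fun y t => (c * Real.exp (-|y|)) *
      ((c * Φ1 (y + c * t, t) + Dv (0,1) Φ (y + c * t, t))
        - (c * Φ111 (y + c * t, t) + Dv (0,1) Φ11 (y + c * t, t))) with hWdef
  -- tsupport chains
  have nmem1 : ∀ p : ℝ × ℝ, p ∉ tsupport Φ → p ∉ tsupport Φ1 :=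
    fun p hp hq => hp (tsupport_Dv_subset _ _ hq)
  have nmem11 : ∀ p : ℝ × ℝ, p ∉ tsupport Φ → p ∉ tsupport Φ11 :=
    fun p hp hq => nmem1 p hp (tsupport_Dv_subset _ _ hq)
  have nmem111 : ∀ p : ℝ × ℝ, p ∉ tsupport Φ → p ∉ tsupport Φ111 :=
    fun p hp hq => nmem11 p hp (tsupport_Dv_subset _ _ hq)
  have Wzero : ∀ y t : ℝ, (y + c * t, t) ∉ tsupport Φ → W y t = 0 := by
    intro y t hp
    simp only [hWdef]
    rw [Dv_eq_zero _ hp, Dv_eq_zero _ (nmem11 _ hp),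
      show Φ1 (y + c * t, t) = 0 from Dv_eq_zero _ hp,
      show Φ111 (y + c * t, t) = 0 from Dv_eq_zero _ (nmem11 _ hp)]
    ring
  -- continuity facts
  have cΦ1 : Continuous Φ1 := hΦ1.continuous
  have cΦ111 : Continuous Φ111 := hΦ111.continuous
  have cDvΦ : Continuous (Dv (0,1) Φ) := (contDiff_Dv hΦ (0,1)).continuous
  have cDvΦ11 : Continuous (Dv (0,1) Φ11) := (contDiff_Dv hΦ11 (0,1)).continuous
  -- the per-time-slice reduction
  have per_t : ∀ t : ℝ, (∫ x : ℝ,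
      (u x t * pdt φ x t
        - u x t * pdt (pdx (pdx φ)) x t
        + (3 / 2) * (u x t) ^ 2 * pdx φ x t
        + (1 / 2) * (ux x t) ^ 2 * pdx φ x t
        - (1 / 2) * (u x t) ^ 2 * pdx (pdx (pdx φ)) x t)) = ∫ y : ℝ, W y t := by
    intro t
    set G : ℝ → ℝ := fun x => u x t * Dv (0,1) Φ (x, t) - u x t * Dv (0,1) Φ11 (x, t)
      + 2 * (u x t)^2 * Φ1 (x, t) - (1/2) * (u x t)^2 * Φ111 (x, t) with hGdef
    have stepA : (∫ x : ℝ,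
        (u x t * pdt φ x t
          - u x t * pdt (pdx (pdx φ)) x t
          + (3 / 2) * (u x t) ^ 2 * pdx φ x t
          + (1 / 2) * (ux x t) ^ 2 * pdx φ x t
          - (1 / 2) * (u x t) ^ 2 * pdx (pdx (pdx φ)) x t)) = ∫ x : ℝ, G x := by
      apply integral_congr_ae
      have hne : ∀ᵐ x : ℝ, x ≠ c * t := by
        refine eventually_of_mem (U := {c * t}ᶜ) ?_ (fun x hx => hx)
        rw [mem_ae_iff, compl_compl]
        exact measure_singleton _
      filter_upwards [hne] with x hx
      have hsq : (ux x t) ^ 2 = (u x t) ^ 2 := by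
        rw [hux, mul_pow, neg_pow, sign_sq (sub_ne_zero.mpr hx)]
        ring
      rw [et x t, e11t x t, e1 x t, e111 x t, hsq, hGdef]
      ring
    have stepB : ∫ x : ℝ, G x = ∫ y : ℝ, G (y + c * t) :=
      (integral_add_right_eq_self G (c * t)).symm
    have hu' : ∀ y : ℝ, u (y + c * t) t = c * Real.exp (-|y|) := by
      intro y
      rw [hu, show y + c * t - c * t = y by ring]
    set S : ℝ → ℝ := fun y =>
        (c * Real.exp (-|y|)) * (c * Φ111 (y + c * t, t) - c * Φ1 (y + c * t, t))
        + 2 * (c * Real.exp (-|y|))^2 * Φ1 (y + c * t, t)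
        - (1/2) * (c * Real.exp (-|y|))^2 * Φ111 (y + c * t, t) with hSdef
    have stepC : ∀ y : ℝ, G (y + c * t) = W y t + S y := by
      intro y
      rw [hGdef, hWdef, hSdef]
      simp only [hu' y]
      ring
    have hsp := spatial c t hΦ1 hΦ1s
    have intS : Integrable S := hsp.1
    have hS0 : ∫ y : ℝ, S y = 0 := hsp.2
    have contW : Continuous (fun y => W y t) := by
      rw [hWdef]
      have hcmap : Continuous (fun y : ℝ => (y + c * t, t)) := by fun_prop
      exact (continuous_const.mul (Real.continuous_exp.comp (continuous_abs.neg))).mul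
        ((((continuous_const.mul (cΦ1.comp hcmap))).add (cDvΦ.comp hcmap)).sub
          (((continuous_const.mul (cΦ111.comp hcmap))).add (cDvΦ11.comp hcmap)))
    have hcsW : HasCompactSupport (fun y => W y t) :=
      hcs_pre hΦs (e := fun y : ℝ => (y + c * t, t)) (π := fun p : ℝ × ℝ => p.1 - c * t)
        (by fun_prop) (fun y => by simp) (fun y hy => Wzero y t hy)
    have intW : Integrable (fun y => W y t) :=
      contW.integrable_of_hasCompactSupport hcsW
    calc (∫ x : ℝ,
        (u x t * pdt φ x t
          - u x t * pdt (pdx (pdx φ)) x t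
          + (3 / 2) * (u x t) ^ 2 * pdx φ x t
          + (1 / 2) * (ux x t) ^ 2 * pdx φ x t
          - (1 / 2) * (u x t) ^ 2 * pdx (pdx (pdx φ)) x t)) = ∫ x : ℝ, G x := stepA
      _ = ∫ y : ℝ, G (y + c * t) := stepB
      _ = ∫ y : ℝ, (W y t + S y) := by
          apply integral_congr_ae
          exact Eventually.of_forall stepC
      _ = (∫ y : ℝ, W y t) + ∫ y : ℝ, S y := integral_add intW intS
      _ = ∫ y : ℝ, W y t := by rw [hS0, add_zero]
  -- now the double integral
  rw [integral_congr_ae (Eventually.of_forall per_t)]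
  -- Fubini
  have contW2 : Continuous (fun z : ℝ × ℝ => W z.2 z.1) := by
    rw [hWdef]
    have hcmap : Continuous (fun z : ℝ × ℝ => (z.2 + c * z.1, z.1)) := by fun_prop
    exact (continuous_const.mul
        (Real.continuous_exp.comp ((continuous_abs.comp continuous_snd).neg))).mul
      ((((continuous_const.mul (cΦ1.comp hcmap))).add (cDvΦ.comp hcmap)).sub
        (((continuous_const.mul (cΦ111.comp hcmap))).add (cDvΦ11.comp hcmap)))
  have hcsW2 : HasCompactSupport (fun z : ℝ × ℝ => W z.2 z.1) :=
    hcs_pre hΦs (e := fun z : ℝ × ℝ => (z.2 + c * z.1, z.1))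
      (π := fun q : ℝ × ℝ => (q.2, q.1 - c * q.2))
      (by fun_prop) (fun z => by simp) (fun z hz => Wzero z.2 z.1 hz)
  have intW2 : Integrable (Function.uncurry (fun t y : ℝ => W y t))
      (volume.prod volume) :=
    contW2.integrable_of_hasCompactSupport hcsW2
  rw [integral_integral_swap intW2]
  -- for each y the time integral vanishes
  have inner_zero : ∀ y : ℝ, (∫ t : ℝ, W y t) = 0 := by
    intro y
    set g : ℝ → ℝ := fun s => (c * Real.exp (-|y|)) * (Φ (y + c * s, s) - Φ11 (y + c * s, s))
      with hgdef
    have hmap : ContDiff ℝ ∞ (fun s : ℝ => (y + c * s, s)) :=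
      (contDiff_const.add (contDiff_const.mul contDiff_id)).prodMk contDiff_id
    have hgsm : ContDiff ℝ ∞ g :=
      contDiff_const.mul ((hΦ.comp hmap).sub (hΦ11.comp hmap))
    have hgs : HasCompactSupport g := by
      apply hcs_pre (hΦs.union hΦ11s) (e := fun s : ℝ => (y + c * s, s))
        (π := fun p : ℝ × ℝ => p.2) continuous_snd (fun s => rfl)
      intro s hs
      simp only [hgdef]
      rw [image_eq_zero_of_notMem_tsupport (f := Φ) (fun hq => hs (Or.inl hq)),
        image_eq_zero_of_notMem_tsupport (f := Φ11) (fun hq => hs (Or.inr hq))]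
      ring
    have hder : ∀ s : ℝ, HasDerivAt g (W y s) s := by
      intro s
      have := ((hasDerivAt_frame hΦ c y s).sub (hasDerivAt_frame hΦ11 c y s)).const_mul
        (c * Real.exp (-|y|))
      rw [hWdef]
      exact this
    have : (fun t : ℝ => W y t) = deriv g := funext fun s => ((hder s).deriv).symm
    rw [this]
    exact integral_deriv_zero hgsm hgs
  rw [integral_congr_ae (Eventually.of_forall inner_zero), integral_zero]
end

section
/- With τζ = −conj(ζ) on the Jacobian J = ℂ^g/Λ, Λ = 2πi ℤ^g + B ℤ^g, conj(B) = B − 2πi H, the set S₂ = {ζ ∈ J : ζ − τζ = πi diag(H)} is the disjoint union over v ∈ (ℤ/2ℤ)^{g−r} of the tori T̃_v = { 2πi(α₁ e₁ + … + α_g e_g) + (v₁/2) B_{r+1} + … + (v_{g−r}/2) B_g : α_j ∈ ℝ/ℤ }, where r = rank H; i.e., every ζ ∈ S₂ lies in exactly one T̃_v. -/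
/-!
Write `z + conj z = πi diag(H) + 2πi N + B M` for a point `z` of `S₂`. Since `Im B = π H`, the
imaginary part of this identity reads `diag(H) + H M = -2N`. In the normal form `diag(H) = 0` and
the row of `H` belonging to the partner of an index `j < r` picks out `M_j`, so these coordinates
of `M` are even. With `v = M mod 2`, the decomposition `z = i Im z + (z + conj z)/2` then places
`z` on `T̃_v`. Conversely, the real part of a point of `T̃_v` is `Re B (v/2 + M')` for an integer
vector `M'`, and `Re B` is nondegenerate, so `v` is determined modulo `2`.
-/

namespace RealJacobian

open ComplexConjugate Matrix

variable {g : ℕ}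

def OnTorus (B : Matrix (Fin g) (Fin g) ℂ) (v : Fin g → ℤ) (z : Fin g → ℂ) : Prop :=
  ∃ (α : Fin g → ℝ) (N M : Fin g → ℤ), ∀ i,
    z i = 2 * (Real.pi : ℂ) * Complex.I * (α i : ℂ) + (∑ j, ((v j : ℂ) / 2) * B i j)
      + (2 * (Real.pi : ℂ) * Complex.I * (N i : ℂ) + ∑ j, B i j * (M j : ℂ))

theorem _root_.Matrix.mulVec_injective_of_neg_definite {n : Type*} [Fintype n]
    {A : Matrix n n ℝ} (hA : ∀ x : n → ℝ, x ≠ 0 → ∑ i, ∑ j, A i j * x i * x j < 0) :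
    Function.Injective A.mulVec := by
  intro x y hxy
  by_contra hne
  have hAd : A *ᵥ (x - y) = 0 := by rw [Matrix.mulVec_sub, hxy, sub_self]
  have hform : ∑ i, ∑ j, A i j * (x - y) i * (x - y) j = (x - y) ⬝ᵥ (A *ᵥ (x - y)) := by
    simp only [dotProduct, Matrix.mulVec, Finset.mul_sum]
    exact Finset.sum_congr rfl fun i _ => Finset.sum_congr rfl fun j _ => by ring
  have := hA (x - y) (sub_ne_zero.mpr hne)
  rw [hform, hAd, dotProduct_zero] at this
  exact lt_irrefl 0 this

theorem OnTorus.re_eq {B : Matrix (Fin g) (Fin g) ℂ} {v : Fin g → ℤ} {z : Fin g → ℂ}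
    (h : OnTorus B v z) :
    ∃ M : Fin g → ℤ, ∀ i, (z i).re = ∑ j, (B i j).re * ((v j : ℝ) / 2 + M j) := by
  obtain ⟨α, N, M, h⟩ := h
  refine ⟨M, fun i => ?_⟩
  rw [h i]
  simp [Complex.re_sum, Complex.mul_re, mul_add, Finset.sum_add_distrib, mul_comm]

theorem OnTorus.unique {B : Matrix (Fin g) (Fin g) ℂ}
    (hneg : ∀ x : Fin g → ℝ, x ≠ 0 → ∑ i, ∑ j, (B i j).re * x i * x j < 0)
    {v v' : Fin g → ℤ} (hv : ∀ i, v i = 0 ∨ v i = 1) (hv' : ∀ i, v' i = 0 ∨ v' i = 1)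
    {z : Fin g → ℂ} (h : OnTorus B v z) (h' : OnTorus B v' z) : v = v' := by
  obtain ⟨M, hM⟩ := h.re_eq
  obtain ⟨M', hM'⟩ := h'.re_eq
  have hre := Matrix.mulVec_injective_of_neg_definite (A := B.map Complex.re) hneg
    (funext fun i => (hM i).symm.trans (hM' i) :
      (B.map Complex.re) *ᵥ (fun j => (v j : ℝ) / 2 + M j)
        = (B.map Complex.re) *ᵥ (fun j => (v' j : ℝ) / 2 + M' j))
  funext j
  have hj : ((v j - v' j : ℤ) : ℝ) = ((2 * (M' j - M j) : ℤ) : ℝ) := by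
    push_cast; linarith [congrFun hre j]
  have := Int.cast_injective hj
  rcases hv j with h | h <;> rcases hv' j with h' | h' <;> omega

theorem onTorus_of_sub_neg_conj_eq {B : Matrix (Fin g) (Fin g) ℂ} {z : Fin g → ℂ}
    {d N M : Fin g → ℤ}
    (hz : ∀ i, z i - -conj (z i) = (Real.pi : ℂ) * Complex.I * (d i : ℂ)
      + (2 * (Real.pi : ℂ) * Complex.I * (N i : ℂ) + ∑ j, B i j * (M j : ℂ))) :
    OnTorus B (fun j => M j % 2) z := by
  -- `z = i Im z + (z + conj z) / 2`, and `M = M % 2 + 2 (M / 2)`.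
  refine ⟨fun i => (z i).im / (2 * Real.pi) + N i / 2 + d i / 4, 0, fun j => M j / 2,
    fun i => ?_⟩
  have hM : ∑ j, B i j * (M j : ℂ) = 2 * (∑ j, ((M j % 2 : ℤ) : ℂ) / 2 * B i j
      + ∑ j, B i j * ((M j / 2 : ℤ) : ℂ)) := by
    rw [mul_add, Finset.mul_sum, Finset.mul_sum, ← Finset.sum_add_distrib]
    refine Finset.sum_congr rfl fun j _ => ?_
    have := congrArg (Int.cast : ℤ → ℂ) (Int.emod_add_mul_ediv (M j) 2)
    push_cast at this
    linear_combination (-B i j) * this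
  have hα : 2 * (Real.pi : ℂ) * Complex.I
        * (((z i).im / (2 * Real.pi) + N i / 2 + d i / 4 : ℝ) : ℂ)
      = (z i).im * Complex.I + Real.pi * Complex.I * N i + Real.pi * Complex.I * d i / 2 := by
    have hπ : (Real.pi : ℂ) ≠ 0 := Complex.ofReal_ne_zero.mpr Real.pi_ne_zero
    push_cast
    field_simp
    ring
  have hconj := Complex.add_conj (z i)
  push_cast at hconj
  simp only [Pi.zero_apply, Int.cast_zero, mul_zero, zero_add]
  linear_combination -hα - Complex.re_add_im (z i) + hz i / 2 - hconj / 2 + hM / 2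

theorem im_eq_pi_mul_of_conj_eq {b : ℂ} {h : ℤ}
    (hb : conj b = b - 2 * (Real.pi : ℂ) * Complex.I * (h : ℂ)) : b.im = Real.pi * h := by
  have := congrArg Complex.im hb
  simp at this
  linarith

theorem diag_add_mulVec_eq_of_sub_neg_conj_eq {B : Matrix (Fin g) (Fin g) ℂ}
    {H : Matrix (Fin g) (Fin g) ℤ}
    (hBH : ∀ i j, conj (B i j) = B i j - 2 * (Real.pi : ℂ) * Complex.I * (H i j : ℂ))
    {z : Fin g → ℂ} {N M : Fin g → ℤ}
    (hz : ∀ i, z i - -conj (z i) = (Real.pi : ℂ) * Complex.I * (H i i : ℂ)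
      + (2 * (Real.pi : ℂ) * Complex.I * (N i : ℂ) + ∑ j, B i j * (M j : ℂ))) (i : Fin g) :
    H i i + (H *ᵥ M) i = -2 * N i := by
  have him := congrArg Complex.im (hz i)
  simp only [sub_neg_eq_add, Complex.add_im, Complex.conj_im, add_neg_cancel, mul_assoc,
    Complex.mul_im, Complex.mul_re, Complex.ofReal_re, Complex.ofReal_im, Complex.I_re,
    Complex.I_im, Complex.intCast_re, Complex.intCast_im, Complex.re_ofNat, Complex.im_ofNat,
    mul_zero, zero_mul, one_mul, zero_add, add_zero, sub_self, Complex.im_sum,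
    im_eq_pi_mul_of_conj_eq (hBH i _), ← Finset.mul_sum] at him
  have : Real.pi * ((H i i + (H *ᵥ M) i + 2 * N i : ℤ) : ℝ) = 0 := by
    push_cast [mulVec, dotProduct]
    linear_combination -him
  have : H i i + (H *ᵥ M) i + 2 * N i = 0 := by
    exact_mod_cast (mul_eq_zero.mp this).resolve_left Real.pi_ne_zero
  omega

/-- `k` diagonal blocks `[[0,1],[1,0]]` followed by zeros. -/
def dividingNormalForm (g k : ℕ) : Matrix (Fin g) (Fin g) ℤ :=
  Matrix.of fun i j => if (i : ℕ) / 2 = (j : ℕ) / 2 ∧ (i : ℕ) < 2 * k ∧ i ≠ j then 1 else 0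

@[simp]
theorem dividingNormalForm_diag (k : ℕ) (i : Fin g) : dividingNormalForm g k i i = 0 := by
  simp [dividingNormalForm]

theorem dividingNormalForm_mulVec_apply {k : ℕ} {i j : Fin g} (hij : (i : ℕ) / 2 = (j : ℕ) / 2)
    (hne : i ≠ j) (hj : (j : ℕ) < 2 * k) (M : Fin g → ℤ) :
    (dividingNormalForm g k *ᵥ M) i = M j := by
  have hrow : ∀ l, dividingNormalForm g k i l = if j = l then 1 else 0 := by
    intro l
    simp only [dividingNormalForm, of_apply, Fin.ext_iff]
    have : (i : ℕ) ≠ j := Fin.val_ne_of_ne hne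
    congr 1
    apply propext
    omega
  simp [mulVec, dotProduct, hrow]

theorem two_dvd_of_two_dvd_dividingNormalForm_mulVec {k : ℕ} (hk : 2 * k ≤ g) {M : Fin g → ℤ}
    (hM : ∀ i, 2 ∣ (dividingNormalForm g k *ᵥ M) i) (j : Fin g) (hj : (j : ℕ) < 2 * k) :
    2 ∣ M j := by
  obtain ⟨i, hij, hne⟩ : ∃ i : Fin g, (i : ℕ) / 2 = (j : ℕ) / 2 ∧ i ≠ j :=
    ⟨⟨j + 1 - 2 * (j % 2), by omega⟩, by dsimp only; omega,
      fun h => by have := congrArg Fin.val h; dsimp only at this; omega⟩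
  exact dividingNormalForm_mulVec_apply hij hne hj M ▸ hM i

end RealJacobian

open RealJacobian in
theorem S2_disjoint_union_of_tori_general (g k : ℕ) (hk : 2 * k ≤ g)
    (B : Matrix (Fin g) (Fin g) ℂ)
    (hneg : ∀ x : Fin g → ℝ, x ≠ 0 → ∑ i, ∑ j, (B i j).re * x i * x j < 0)
    (H : Matrix (Fin g) (Fin g) ℤ)
    (hH : ∀ i j, H i j
        = if (i : ℕ) / 2 = (j : ℕ) / 2 ∧ (i : ℕ) < 2 * k ∧ i ≠ j then 1 else 0)
    (hBH : ∀ i j, (starRingEnd ℂ) (B i j)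
        = B i j - 2 * (Real.pi : ℂ) * Complex.I * (H i j : ℂ))
    (z : Fin g → ℂ)
    (hz : ∃ N M : Fin g → ℤ, ∀ i,
      z i - (-(starRingEnd ℂ) (z i))
        = (Real.pi : ℂ) * Complex.I * (H i i : ℂ)
          + (2 * (Real.pi : ℂ) * Complex.I * (N i : ℂ) + ∑ j, B i j * (M j : ℂ))) :
    ∃! v : Fin g → ℤ,
      (∀ i : Fin g, (v i = 0 ∨ v i = 1) ∧ ((i : ℕ) < 2 * k → v i = 0)) ∧
      ∃ (α : Fin g → ℝ) (N M : Fin g → ℤ), ∀ i,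
        z i = 2 * (Real.pi : ℂ) * Complex.I * (α i : ℂ)
          + (∑ j, ((v j : ℂ) / 2) * B i j)
          + (2 * (Real.pi : ℂ) * Complex.I * (N i : ℂ) + ∑ j, B i j * (M j : ℂ)) := by
  obtain ⟨N, M, hz⟩ := hz
  have hHM := diag_add_mulVec_eq_of_sub_neg_conj_eq hBH hz
  obtain rfl : H = dividingNormalForm g k := Matrix.ext hH
  have hMeven := two_dvd_of_two_dvd_dividingNormalForm_mulVec hk fun i =>
    ⟨-N i, by linarith [hHM i, dividingNormalForm_diag k i]⟩
  have hz_torus : OnTorus B (fun j => M j % 2) z := onTorus_of_sub_neg_conj_eq hz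
  refine ⟨fun j => M j % 2, ⟨fun i => ⟨Int.emod_two_eq (M i), fun hi =>
    Int.emod_eq_zero_of_dvd (hMeven i hi)⟩, hz_torus⟩, ?_⟩
  rintro v ⟨hv, hv_torus⟩
  exact OnTorus.unique hneg (fun i => (hv i).1) (fun i => Int.emod_two_eq (M i)) hv_torus hz_torus

/-- with `τζ = −conj(ζ)` on the Jacobian `ℂ^g/(2πi ℤ^g + B ℤ^g)` and
`conj(B) = B − 2πi H`, with `H` in the dividing normal form (`k` antidiagonal 2×2
blocks `[[0,1],[1,0]]` followed by zeros, so `r = rank H = 2k`), the set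
`S₂ = {ζ : ζ − τζ = πi diag(H)}` is the disjoint union over `v ∈ (ℤ/2ℤ)^{g−r}` of
the tori `T̃_v = { 2πi α + (1/2) Σ_{j>r} v_j B_j : α ∈ (ℝ/ℤ)^g }`: every point of
`S₂` lies in exactly one torus `T̃_v`. -/
theorem S2_disjoint_union_of_tori (g k : ℕ) (hg : 1 ≤ g) (hk : 2 * k ≤ g)
    (B : Matrix (Fin g) (Fin g) ℂ)
    (hsym : ∀ i j, B i j = B j i)
    (hneg : ∀ x : Fin g → ℝ, x ≠ 0 → ∑ i, ∑ j, (B i j).re * x i * x j < 0)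
    (H : Matrix (Fin g) (Fin g) ℤ)
    (hH : ∀ i j, H i j
        = if (i : ℕ) / 2 = (j : ℕ) / 2 ∧ (i : ℕ) < 2 * k ∧ i ≠ j then 1 else 0)
    (hBH : ∀ i j, (starRingEnd ℂ) (B i j)
        = B i j - 2 * (Real.pi : ℂ) * Complex.I * (H i j : ℂ))
    (z : Fin g → ℂ)
    (hz : ∃ N M : Fin g → ℤ, ∀ i,
      z i - (-(starRingEnd ℂ) (z i))
        = (Real.pi : ℂ) * Complex.I * (H i i : ℂ)
          + (2 * (Real.pi : ℂ) * Complex.I * (N i : ℂ) + ∑ j, B i j * (M j : ℂ))) :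
    ∃! v : Fin g → ℤ,
      (∀ i : Fin g, (v i = 0 ∨ v i = 1) ∧ ((i : ℕ) < 2 * k → v i = 0)) ∧
      ∃ (α : Fin g → ℝ) (N M : Fin g → ℤ), ∀ i,
        z i = 2 * (Real.pi : ℂ) * Complex.I * (α i : ℂ)
          + (∑ j, ((v j : ℂ) / 2) * B i j)
          + (2 * (Real.pi : ℂ) * Complex.I * (N i : ℂ) + ∑ j, B i j * (M j : ℂ)) :=
  S2_disjoint_union_of_tori_general g k hk B hneg H hH hBH z hz
end
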